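/- Let M be a finitely generated ℤ^d-graded S_A-module admitting a filtration 0 = M_0 ⊆ M_1 ⊆ ⋯ ⊆ M_r = M by graded submodules such that for each i there is a face F_i ⪯ A and α_i ∈ ℤ^d with M_i/M_{i−1} ≅ S_{F_i}(−α_i) as graded modules (S_{F_i} = ℂ[ℕF_i], regarded as an S_A-module via the surjection S_A → S_{F_i} killing t^{a_j} for a_j ∉ F_i, and (−α_i) the grading shift placing the generator in degree α_i). Then for every face H ⪯ A: qdeg M[∂^{−H}] = ⋃_{i : F_i ⪰ H} (ℂF_i + α_i). -/

import Mathlib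

/-!
Common setup: `A` is a `d × n` integer matrix, given by its columns `a : Fin n → Lat d`,
with `ℤA = ℤ^d` (`SpansZ`) and `ℕA` pointed (`Pointed`).  Faces, semigroups, graded
modules, quasidegree sets, the dualizing complex `ω•_{S_A}` and the Ishida complexes
`℧•_F` are formalized below; all cohomology statements are expressed via the
(ℤ^d-)graded components of these complexes.
-/

namespace GKZ

open scoped Classical

noncomputable section

abbrev Lat (d : ℕ) := Fin d → ℤ
abbrev CS (d : ℕ) := Fin d → ℂ
abbrev Laur (d : ℕ) := AddMonoidAlgebra ℂ (Lat d)

/-- Inclusion ℤ^d ⊆ ℂ^d. -/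
def toC {d : ℕ} (α : Lat d) : CS d := fun i => (α i : ℂ)
/-- Inclusion ℤ^d ⊆ ℝ^d. -/
def toR {d : ℕ} (α : Lat d) : Fin d → ℝ := fun i => (α i : ℝ)
/-- The monomial t^α in the Laurent polynomial ring ℂ[ℤ^d]. -/
def mono {d : ℕ} (α : Lat d) : Laur d := AddMonoidAlgebra.single α 1

variable {d n : ℕ}

/-- The affine semigroup ℕA generated by the columns of `A`. -/
def NA (a : Fin n → Lat d) : AddSubmonoid (Lat d) := AddSubmonoid.closure (Set.range a)

/-- ℕA is pointed: ℕA ∩ (−ℕA) = {0}. -/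
def Pointed (a : Fin n → Lat d) : Prop := ∀ x ∈ NA a, -x ∈ NA a → x = 0

/-- ℤA = ℤ^d. -/
def SpansZ (a : Fin n → Lat d) : Prop :=
  AddSubgroup.closure (Set.range a) = (⊤ : AddSubgroup (Lat d))

/-- The real cone ℝ₊F spanned by the columns indexed by `F`. -/
def cone (a : Fin n → Lat d) (F : Set (Fin n)) : Set (Fin d → ℝ) :=
  { x | ∃ c : Fin n → ℝ, (∀ i, 0 ≤ c i) ∧ (∀ i, i ∉ F → c i = 0) ∧ x = ∑ i, c i • toR (a i) }

/-- `F` is a face of `A`: ℝ₊F is a face of the cone ℝ₊A, and `F` consists of all the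
columns of `A` lying on that face. -/
def IsFace (a : Fin n → Lat d) (F : Set (Fin n)) : Prop :=
  (∀ x y, x ∈ cone a Set.univ → y ∈ cone a Set.univ →
      x + y ∈ cone a F → x ∈ cone a F ∧ y ∈ cone a F) ∧
  (∀ i, toR (a i) ∈ cone a F → i ∈ F)

/-- ℕF. -/
def NFace (a : Fin n → Lat d) (F : Set (Fin n)) : AddSubmonoid (Lat d) :=
  AddSubmonoid.closure (a '' F)

/-- ℤF. -/
def ZFace (a : Fin n → Lat d) (F : Set (Fin n)) : AddSubgroup (Lat d) :=
  AddSubgroup.closure (a '' F)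

/-- ℂF ⊆ ℂ^d. -/
def CFace (a : Fin n → Lat d) (F : Set (Fin n)) : Submodule ℂ (CS d) :=
  Submodule.span ℂ (toC '' (a '' F))

/-- d_F, the rank of ℤF. -/
def dimF (a : Fin n → Lat d) (F : Set (Fin n)) : ℕ :=
  Module.finrank ℤ (Submodule.span ℤ (a '' F))

/-- σ_F, the sum of the columns of F. -/
def sigmaF (a : Fin n → Lat d) (F : Set (Fin n)) : Lat d :=
  ∑ i : Fin n, if i ∈ F then a i else 0

/-- ε_A = a_1 + ⋯ + a_n. -/
def epsA (a : Fin n → Lat d) : Lat d := ∑ i : Fin n, a i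

/-- ℕA − ℕF ⊆ ℤ^d. -/
def NAmNF (a : Fin n → Lat d) (F : Set (Fin n)) : Set (Lat d) :=
  {γ | ∃ u ∈ NA a, ∃ v ∈ NFace a F, γ = u - v}

/-- ℕF − ℕA ⊆ ℤ^d. -/
def NFmNA (a : Fin n → Lat d) (F : Set (Fin n)) : Set (Lat d) :=
  {γ | ∃ u ∈ NFace a F, ∃ v ∈ NA a, γ = u - v}

/-- ℕF − ℕH ⊆ ℤ^d. -/
def NFmNH (a : Fin n → Lat d) (F H : Set (Fin n)) : Set (Lat d) :=
  {γ | ∃ u ∈ NFace a F, ∃ v ∈ NFace a H, γ = u - v}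

/-- ℕA is normal: ℕA = ℤ^d ∩ ℝ₊A. -/
def Normal (a : Fin n → Lat d) : Prop :=
  ∀ γ : Lat d, γ ∈ NA a ↔ toR γ ∈ cone a Set.univ

/-- The Zariski closure of a subset of ℂ^d. -/
def zClosure {d : ℕ} (T : Set (CS d)) : Set (CS d) :=
  {x | ∀ p : MvPolynomial (Fin d) ℂ, (∀ y ∈ T, MvPolynomial.eval y p = 0) →
    MvPolynomial.eval x p = 0}

def IsZClosed {d : ℕ} (Z : Set (CS d)) : Prop := zClosure Z ⊆ Z

/-- Irreducibility of a subset of ℂ^d in the Zariski topology. -/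
def ZIrred {d : ℕ} (Z : Set (CS d)) : Prop :=
  Z.Nonempty ∧ ∀ C₁ C₂ : Set (CS d), IsZClosed C₁ → IsZClosed C₂ →
    Z ⊆ C₁ ∪ C₂ → Z ⊆ C₁ ∨ Z ⊆ C₂

/-- Krull (topological) dimension of a subset of ℂ^d with the Zariski topology:
the Krull dimension of the poset of irreducible Zariski-closed subsets contained in it. -/
def zdim {d : ℕ} (Z : Set (CS d)) : WithBot ℕ∞ :=
  Order.krullDim {C : Set (CS d) // C ⊆ Z ∧ IsZClosed C ∧ ZIrred C}

/-- `Z` is an irreducible component of `W`: a maximal irreducible Zariski-closed subset. -/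
def IsIrredComp {d : ℕ} (Z W : Set (CS d)) : Prop :=
  Z ⊆ W ∧ IsZClosed Z ∧ ZIrred Z ∧
    ∀ Z' : Set (CS d), IsZClosed Z' → ZIrred Z' → Z ⊆ Z' → Z' ⊆ W → Z' = Z

/-- The type of faces of `A`. -/
def FaceT (a : Fin n → Lat d) := {G : Set (Fin n) // IsFace a G}

instance (a : Fin n → Lat d) : Finite (FaceT a) := by
  unfold FaceT; infer_instance

noncomputable instance (a : Fin n → Lat d) : Fintype (FaceT a) := Fintype.ofFinite _

/-- Degree set of the localization M[∂^{−G}] of the monomial module with degree set `E`: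
the set E − ℕG. -/
def locE (a : Fin n → Lat d) (E : Set (Lat d)) (G : Set (Fin n)) : Set (Lat d) :=
  {γ | ∃ f ∈ NFace a G, γ + f ∈ E}

/-- Functions supported on a subset, as a ℂ-submodule of the function space. -/
def funSupported {ι : Type*} (S : Set ι) : Submodule ℂ (ι → ℂ) where
  carrier := {c | ∀ i, i ∉ S → c i = 0}
  add_mem' := by
    intro x y hx hy i hi
    simp only [Set.mem_setOf_eq] at hx hy
    simp [Pi.add_apply, hx i hi, hy i hi]
  zero_mem' := by intro i _; rfl
  smul_mem' := by
    intro r x hx i hi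
    simp only [Set.mem_setOf_eq] at hx
    simp [Pi.smul_apply, hx i hi]

/-- The degree-γ part of the term of the Ishida complex ℧•_F(M) (base face `F`, monomial
module with degree set `E`) whose summands are indexed by the faces of absolute dimension
`j` (cohomological degree `j − d_F`): functions on the faces `G ⊇ F` with `d_G = j` and
`γ ∈ E − ℕG`. -/
def ishChain (a : Fin n → Lat d) (E : Set (Lat d)) (F : Set (Fin n)) (j : ℤ) (γ : Lat d) :
    Submodule ℂ (FaceT a → ℂ) :=
  funSupported {G : FaceT a | F ⊆ G.1 ∧ (dimF a G.1 : ℤ) = j ∧ γ ∈ locE a E G.1}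

/-- The differential of the Ishida complex (in each ℤ^d-degree): the component from a face
`G'` into a face `G''` covering it is `ε G' G''` times the natural localization map. -/
def ishDelta (a : Fin n → Lat d) (ε : Set (Fin n) → Set (Fin n) → ℂ) :
    (FaceT a → ℂ) →ₗ[ℂ] (FaceT a → ℂ) where
  toFun c := fun G'' => ∑ G' : FaceT a,
    if G'.1 ⊆ G''.1 ∧ dimF a G''.1 = dimF a G'.1 + 1 then ε G'.1 G''.1 * c G' else 0
  map_add' x y := by
    funext G''
    simp only [Pi.add_apply, ← Finset.sum_add_distrib]
    refine Finset.sum_congr rfl fun G' _ => ?_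
    by_cases h : G'.1 ⊆ G''.1 ∧ dimF a G''.1 = dimF a G'.1 + 1
    · simp [h, mul_add]
    · simp [h]
  map_smul' r x := by
    funext G''
    simp only [Pi.smul_apply, smul_eq_mul, RingHom.id_apply, Finset.mul_sum]
    refine Finset.sum_congr rfl fun G' _ => ?_
    by_cases h : G'.1 ⊆ G''.1 ∧ dimF a G''.1 = dimF a G'.1 + 1
    · simp only [h, and_self, if_true]; ring
    · simp [h]

/-- Degree-γ cocycles of the Ishida complex at absolute dimension `j`. -/
def ishZ (a : Fin n → Lat d) (E : Set (Lat d)) (ε : Set (Fin n) → Set (Fin n) → ℂ)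
    (F : Set (Fin n)) (j : ℤ) (γ : Lat d) : Submodule ℂ (FaceT a → ℂ) :=
  ishChain a E F j γ ⊓ LinearMap.ker (ishDelta a ε)

/-- Degree-γ coboundaries of the Ishida complex at absolute dimension `j`. -/
def ishB (a : Fin n → Lat d) (E : Set (Lat d)) (ε : Set (Fin n) → Set (Fin n) → ℂ)
    (F : Set (Fin n)) (j : ℤ) (γ : Lat d) : Submodule ℂ (FaceT a → ℂ) :=
  Submodule.map (ishDelta a ε) (ishChain a E F (j - 1) γ)

/-- The degree-γ component of the cohomology of the Ishida complex ℧•_F(M) at absolute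
dimension `j` (cohomological degree `j − d_F`). -/
abbrev ishH (a : Fin n → Lat d) (E : Set (Lat d)) (ε : Set (Fin n) → Set (Fin n) → ℂ)
    (F : Set (Fin n)) (j : ℤ) (γ : Lat d) :=
  ↥(ishZ a E ε F j γ) ⧸
    Submodule.comap (ishZ a E ε F j γ).subtype (ishB a E ε F j γ)

/-- Nonvanishing of the degree-γ component of the cohomology of the Ishida complex. -/
def ishHne (a : Fin n → Lat d) (E : Set (Lat d)) (ε : Set (Fin n) → Set (Fin n) → ℂ)
    (F : Set (Fin n)) (j : ℤ) (γ : Lat d) : Prop :=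
  ¬ (ishZ a E ε F j γ ≤ ishB a E ε F j γ)

/-- Degree-γ part of the term of ω•_{S_A} in cohomological degree `i`:
functions on the faces `G` with `d_{A/G} = i` and `γ ∈ ℕG − ℕA`. -/
def omChain (a : Fin n → Lat d) (i : ℤ) (γ : Lat d) : Submodule ℂ (FaceT a → ℂ) :=
  funSupported {G : FaceT a | (dimF a G.1 : ℤ) = (d : ℤ) - i ∧ γ ∈ NFmNA a G.1}

/-- Degree-γ part of the differential of ω•_{S_A}: the component from a face `G'` to a face
`G''` covered by it is `ε G' G''` times the natural projection ℂ{ℕG'−ℕA} → ℂ{ℕG''−ℕA}. -/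
def omDelta (a : Fin n → Lat d) (ε : Set (Fin n) → Set (Fin n) → ℂ) (γ : Lat d) :
    (FaceT a → ℂ) →ₗ[ℂ] (FaceT a → ℂ) where
  toFun c := fun G'' =>
    if γ ∈ NFmNA a G''.1 then
      ∑ G' : FaceT a,
        if G''.1 ⊆ G'.1 ∧ dimF a G'.1 = dimF a G''.1 + 1 then ε G'.1 G''.1 * c G' else 0
    else 0
  map_add' x y := by
    funext G''
    by_cases hγ : γ ∈ NFmNA a G''.1
    · simp only [Pi.add_apply, hγ, if_true, ← Finset.sum_add_distrib]
      refine Finset.sum_congr rfl fun G' _ => ?_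
      by_cases h : G''.1 ⊆ G'.1 ∧ dimF a G'.1 = dimF a G''.1 + 1
      · simp [h, mul_add]
      · simp [h]
    · simp [hγ]
  map_smul' r x := by
    funext G''
    by_cases hγ : γ ∈ NFmNA a G''.1
    · simp only [Pi.smul_apply, smul_eq_mul, RingHom.id_apply, hγ, if_true, Finset.mul_sum]
      refine Finset.sum_congr rfl fun G' _ => ?_
      by_cases h : G''.1 ⊆ G'.1 ∧ dimF a G'.1 = dimF a G''.1 + 1
      · simp only [h, and_self, if_true]; ring
      · simp [h]
    · simp [hγ]

/-- Degree-γ cocycles of ω•_{S_A} in cohomological degree `i`. -/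
def omZ (a : Fin n → Lat d) (ε : Set (Fin n) → Set (Fin n) → ℂ) (i : ℤ) (γ : Lat d) :
    Submodule ℂ (FaceT a → ℂ) :=
  omChain a i γ ⊓ LinearMap.ker (omDelta a ε γ)

/-- Degree-γ coboundaries of ω•_{S_A} in cohomological degree `i`. -/
def omB (a : Fin n → Lat d) (ε : Set (Fin n) → Set (Fin n) → ℂ) (i : ℤ) (γ : Lat d) :
    Submodule ℂ (FaceT a → ℂ) :=
  Submodule.map (omDelta a ε γ) (omChain a (i - 1) γ)

/-- Nonvanishing of H^i(ω•_{S_A})_γ. -/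
def omHne (a : Fin n → Lat d) (ε : Set (Fin n) → Set (Fin n) → ℂ) (i : ℤ) (γ : Lat d) : Prop :=
  ¬ (omZ a ε i γ ≤ omB a ε i γ)

/-- A ℤ^d-graded S_A-module, presented by its grading together with the (degree-shifting)
action of the monomials t^u, u ∈ ℕA. -/
structure GradedSAMod (a : Fin n → Lat d) (M : Type) [AddCommGroup M] [Module ℂ M] where
  decomp : Lat d → Submodule ℂ M
  internal : DirectSum.IsInternal decomp
  act : (u : Lat d) → u ∈ NA a → (M →ₗ[ℂ] M)
  act_zero : ∀ h0 : (0 : Lat d) ∈ NA a, act 0 h0 = LinearMap.id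
  act_add : ∀ (u : Lat d) (hu : u ∈ NA a) (v : Lat d) (hv : v ∈ NA a) (huv : u + v ∈ NA a),
    act (u + v) huv = (act u hu).comp (act v hv)
  act_grade : ∀ (u : Lat d) (hu : u ∈ NA a) (γ : Lat d), ∀ m ∈ decomp γ,
    act u hu m ∈ decomp (γ + u)

/-- Finite generation over S_A. -/
def GradedSAMod.FGmod {a : Fin n → Lat d} {M : Type} [AddCommGroup M] [Module ℂ M]
    (g : GradedSAMod a M) : Prop :=
  ∃ S : Finset M, ∀ m : M,
    m ∈ Submodule.span ℂ {x | ∃ u, ∃ hu : u ∈ NA a, ∃ s ∈ S, x = g.act u hu s}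

/-- Degrees of nonzero homogeneous elements of `M` that survive in the localization
`M[∂^{−H}]` (i.e. are killed by no power of t^{σ_H}). -/
def GradedSAMod.survTdeg {a : Fin n → Lat d} {M : Type} [AddCommGroup M] [Module ℂ M]
    (g : GradedSAMod a M) (H : Set (Fin n)) : Set (Lat d) :=
  {γ | ∃ m ∈ g.decomp γ, m ≠ 0 ∧ ∀ (k : ℕ) (hk : k • sigmaF a H ∈ NA a), g.act _ hk m ≠ 0}

/-- The quasidegree set of the localization `M[∂^{−H}]` of a finitely generated graded
module `M`: the union over `k` of the Zariski closures of the true degree sets of the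
finitely generated graded submodules t^{−kσ_H}·M of the localization. -/
def GradedSAMod.qdegLoc {a : Fin n → Lat d} {M : Type} [AddCommGroup M] [Module ℂ M]
    (g : GradedSAMod a M) (H : Set (Fin n)) : Set (CS d) :=
  ⋃ k : ℕ, zClosure (toC '' {γ : Lat d | γ + k • sigmaF a H ∈ g.survTdeg H})

/-- A ℂ-submodule is graded: it is spanned by its homogeneous elements. -/
def IsGradedSubC {d : ℕ} {M : Type} [AddCommGroup M] [Module ℂ M]
    (decomp : Lat d → Submodule ℂ M) (N : Submodule ℂ M) : Prop :=
  N = Submodule.span ℂ ((N : Set M) ∩ ⋃ γ : Lat d, (decomp γ : Set M))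

/-- A ℂ-submodule is an S_A-submodule: stable under the monomial action. -/
def IsStableSub {a : Fin n → Lat d} {M : Type} [AddCommGroup M] [Module ℂ M]
    (g : GradedSAMod a M) (N : Submodule ℂ M) : Prop :=
  ∀ (u : Lat d) (hu : u ∈ NA a), ∀ m ∈ N, g.act u hu m ∈ N

/-- The semigroup ring S_A = ℂ[ℕA] as a subalgebra of ℂ[ℤ^d]. -/
def SAlg (a : Fin n → Lat d) : Subalgebra ℂ (Laur d) :=
  Algebra.adjoin ℂ {x | ∃ α ∈ NA a, x = mono α}

/-- The monomial t^u, u ∈ ℕA, as an element of S_A. -/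
def smono (a : Fin n → Lat d) (u : Lat d) (hu : u ∈ NA a) : ↥(SAlg a) :=
  ⟨mono u, Algebra.subset_adjoin ⟨u, hu, rfl⟩⟩

/-- The underlying ℂ-vector space of the monomial module ℂ{E}: finitely supported
functions on `E`. -/
abbrev wMod (d : ℕ) (E : Set (Lat d)) := ↥(Finsupp.supported ℂ ℂ E)

/-- The action of the monomial t^w on ℂ{E}: shift the degree by `w`, truncate back to `E`. -/
def wAct {d : ℕ} (E : Set (Lat d)) (w : Lat d) : wMod d E →ₗ[ℂ] wMod d E :=
  (Finsupp.restrictDom ℂ ℂ E).comp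
    ((Finsupp.lmapDomain ℂ ℂ (fun γ => γ + w)).comp (Finsupp.supported ℂ ℂ E).subtype)

/-- The elements annihilated by some power of the ideal generated by the t^{a_i}, i ∉ F. -/
def torsionAt (a : Fin n → Lat d) (F : Set (Fin n)) {ML : Type} [AddCommGroup ML]
    [Module ℂ ML] (TL : (u : Lat d) → u ∈ NA a → (ML →ₗ[ℂ] ML)) : Set ML :=
  {y | ∃ k : ℕ, ∀ f : Fin k → Fin n, (∀ j, f j ∉ F) →
    ∀ h : (∑ j, a (f j)) ∈ NA a, TL (∑ j, a (f j)) h y = 0}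

/-- The toric ideal I_A ⊆ R_A = ℂ[∂_1,…,∂_n]. -/
def toricIdeal (a : Fin n → Lat d) : Ideal (MvPolynomial (Fin n) ℂ) :=
  RingHom.ker (MvPolynomial.aeval (fun i => mono (a i)) : MvPolynomial (Fin n) ℂ →ₐ[ℂ] Laur d)

/-- The ideal I_F^A = I_A + ⟨∂_i : a_i ∉ F⟩ of R_A. -/
def IFA (a : Fin n → Lat d) (F : Set (Fin n)) : Ideal (MvPolynomial (Fin n) ℂ) :=
  toricIdeal a ⊔ Ideal.span {p | ∃ i, i ∉ F ∧ p = MvPolynomial.X i}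

/-- An R_A-submodule is graded: it is spanned by its homogeneous elements. -/
def IsGradedSubR {d n : ℕ} {M : Type} [AddCommGroup M] [Module ℂ M]
    [Module (MvPolynomial (Fin n) ℂ) M]
    (decomp : Lat d → Submodule ℂ M) (N : Submodule (MvPolynomial (Fin n) ℂ) M) : Prop :=
  N = Submodule.span (MvPolynomial (Fin n) ℂ) ((N : Set M) ∩ ⋃ γ : Lat d, (decomp γ : Set M))

/-- `h` is the primitive integral support function of the facet `G`. -/
def IsPISF (a : Fin n → Lat d) (G : Set (Fin n)) (h : Lat d →ₗ[ℤ] ℤ) : Prop :=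
  (∃ x, h x = 1) ∧ (∀ i, 0 ≤ h (a i)) ∧ (∀ i, h (a i) = 0 ↔ i ∈ G)

/-- The ℂ-linear extension of an integral linear form to ℂ^d. -/
def hC {d : ℕ} (h : Lat d →ₗ[ℤ] ℤ) (β : CS d) : ℂ :=
  ∑ j : Fin d, β j * ((h (Pi.single j 1) : ℤ) : ℂ)

/-!
Multiplication by `t^{σ_H}` maps `M_i` into itself, and on `M_i / M_{i-1} ≅ S_{F_i}(−α_i)` it is
injective when `F_i ⪰ H` and zero otherwise: if `σ_H + ℕF_i` met `ℕF_i` then, `F_i` being a face,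
every column of `H` would lie in `F_i`. Hence the degrees of `M[∂^{−H}]` lie in the union of the
`α_i + ℤF_i` over `F_i ⪰ H` and contain the `α_i + ℕF_i`. Finally, the Zariski closure of
`α + ℕF` is `α + ℂF`: a polynomial vanishing at `x + k v` for all `k ∈ ℕ` vanishes on the line
`x + ℂ v`, and affine subspaces are Zariski closed.
-/

section Zariski

lemma subset_zClosure (T : Set (CS d)) : T ⊆ zClosure T := fun x hx _ hp => hp x hx

lemma zClosure_mono {T T' : Set (CS d)} (h : T ⊆ T') : zClosure T ⊆ zClosure T' :=
  fun _ hx p hp => hx p fun y hy => hp y (h hy)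

lemma IsZClosed.zClosure_subset {T Z : Set (CS d)} (hZ : IsZClosed Z) (hTZ : T ⊆ Z) :
    zClosure T ⊆ Z :=
  (zClosure_mono hTZ).trans hZ

/-- A point off `c + V` is separated from it by a polynomial of degree one. -/
lemma isZClosed_affine (c : CS d) (V : Submodule ℂ (CS d)) :
    IsZClosed {x : CS d | x - c ∈ V} := by
  intro x hx
  by_contra hxV
  obtain ⟨ψ, hψ⟩ : ∃ ψ : Module.Dual ℂ (CS d ⧸ V), ψ (V.mkQ (x - c)) ≠ 0 := by
    by_contra! h
    exact hxV ((Submodule.Quotient.mk_eq_zero V).mp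
      ((Module.forall_dual_apply_eq_zero_iff ℂ _).mp h))
  set φ := ψ.comp V.mkQ
  let p : MvPolynomial (Fin d) ℂ :=
    ∑ j, MvPolynomial.C (φ (Pi.single j 1)) * MvPolynomial.X j - MvPolynomial.C (φ c)
  have hp : ∀ y, MvPolynomial.eval y p = φ (y - c) := by
    intro y
    conv_rhs => rw [map_sub, pi_eq_sum_univ' y, map_sum]
    simp [p, mul_comm]
  refine hψ ?_
  rw [← LinearMap.comp_apply, ← hp]
  refine hx p fun y hy => ?_
  rw [hp, LinearMap.comp_apply, Submodule.mkQ_apply, (Submodule.Quotient.mk_eq_zero V).mpr hy,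
    map_zero]

lemma isZClosed_biUnion {ι : Type*} (s : Set ι) (hs : s.Finite) (Z : ι → Set (CS d))
    (hZ : ∀ i ∈ s, IsZClosed (Z i)) : IsZClosed (⋃ i ∈ s, Z i) := by
  intro x hx
  by_contra hxU
  simp only [Set.mem_iUnion, not_exists] at hxU
  have hsep : ∀ i ∈ s, ∃ p : MvPolynomial (Fin d) ℂ,
      (∀ y ∈ Z i, MvPolynomial.eval y p = 0) ∧ MvPolynomial.eval x p ≠ 0 := by
    intro i hi
    by_contra! h
    exact hxU i hi (hZ i hi h)
  choose! p hpZ hpx using hsep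
  have hprod := hx (∏ i ∈ hs.toFinset, p i) fun y hy => by
    obtain ⟨i, hi, hyi⟩ := Set.mem_iUnion₂.mp hy
    rw [map_prod]
    exact Finset.prod_eq_zero (hs.mem_toFinset.mpr hi) (hpZ i hi y hyi)
  rw [map_prod, Finset.prod_eq_zero_iff] at hprod
  obtain ⟨i, hi, h0⟩ := hprod
  exact hpx i (hs.mem_toFinset.mp hi) h0

lemma MvPolynomial.eval_bind₁_X_add_C (p : MvPolynomial (Fin d) ℂ) (y w : CS d) :
    MvPolynomial.eval y (MvPolynomial.bind₁ (fun j => .X j + .C (w j)) p) =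
      MvPolynomial.eval (y + w) p := by
  rw [← MvPolynomial.aeval_eq_eval, MvPolynomial.aeval_bind₁, MvPolynomial.aeval_eq_eval]
  congr 2 with j
  simp

lemma mem_zClosure_add {T : Set (CS d)} {w x : CS d} (hT : ∀ y ∈ T, y + w ∈ T)
    (hx : x ∈ zClosure T) : x + w ∈ zClosure T := by
  intro p hp
  rw [← MvPolynomial.eval_bind₁_X_add_C]
  exact hx _ fun y hy => by rw [MvPolynomial.eval_bind₁_X_add_C]; exact hp _ (hT y hy)

/-- The restriction of `p` to the line is a univariate polynomial with infinitely many roots. -/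
lemma MvPolynomial.eval_add_smul_eq_zero {p : MvPolynomial (Fin d) ℂ} {x v : CS d}
    (h : ∀ k : ℕ, MvPolynomial.eval (x + (k : ℂ) • v) p = 0) (c : ℂ) :
    MvPolynomial.eval (x + c • v) p = 0 := by
  let q : Polynomial ℂ :=
    MvPolynomial.aeval (fun j => Polynomial.C (x j) + Polynomial.C (v j) * Polynomial.X) p
  have hq : ∀ t : ℂ, q.eval t = MvPolynomial.eval (x + t • v) p := by
    intro t
    rw [← Polynomial.coe_aeval_eq_eval, MvPolynomial.comp_aeval_apply,
      MvPolynomial.aeval_eq_eval]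
    congr 2 with j
    simp only [map_add, map_mul, Polynomial.aeval_C, Polynomial.aeval_X,
      Algebra.algebraMap_self, RingHom.id_apply, Pi.add_apply, Pi.smul_apply, smul_eq_mul]
    ring
  have hq0 : q = 0 := by
    refine Polynomial.eq_zero_of_infinite_isRoot q
      ((Set.infinite_range_of_injective Nat.cast_injective).mono ?_)
    rintro _ ⟨k, rfl⟩
    exact (hq k).trans (h k)
  rw [← hq, hq0, Polynomial.eval_zero]

lemma mem_zClosure_add_smul {T : Set (CS d)} {v x : CS d}
    (hT : ∀ y ∈ T, y + v ∈ T) (hx : x ∈ zClosure T) (c : ℂ) : x + c • v ∈ zClosure T := by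
  have hnat : ∀ k : ℕ, x + (k : ℂ) • v ∈ zClosure T := by
    intro k
    induction k with
    | zero => simpa using hx
    | succ k ih => simpa [add_smul, add_assoc] using mem_zClosure_add hT ih
  exact fun p hp => MvPolynomial.eval_add_smul_eq_zero (fun k => hnat k p hp) c

lemma mem_zClosure_add_of_mem_span {T : Set (CS d)} {s : Set (CS d)}
    (hT : ∀ v ∈ s, ∀ y ∈ T, y + v ∈ T) {x w : CS d} (hx : x ∈ zClosure T)
    (hw : w ∈ Submodule.span ℂ s) : x + w ∈ zClosure T := by
  let stab : AddSubmonoid (CS d) :=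
    { carrier := {w | ∀ z ∈ zClosure T, z + w ∈ zClosure T}
      zero_mem' := fun z hz => by simpa using hz
      add_mem' := fun hu hv z hz => by simpa [add_assoc] using hv _ (hu z hz) }
  have hspan : (Submodule.span ℂ s).toAddSubmonoid ≤ stab := by
    rw [Submodule.span_eq_closure, AddSubmonoid.closure_le]
    rintro _ ⟨c, -, v, hv, rfl⟩ z hz
    exact mem_zClosure_add_smul (hT v hv) hz c
  exact hspan hw x hx

end Zariski

section Faces

variable (a : Fin n → Lat d)

@[simp] lemma toC_zero : toC (0 : Lat d) = 0 := by
  funext j; simp [toC]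

@[simp] lemma toR_zero : toR (0 : Lat d) = 0 := by
  funext j; simp [toR]

lemma toC_add (x y : Lat d) : toC (x + y) = toC x + toC y := by
  funext j; simp [toC]

lemma toC_sub (x y : Lat d) : toC (x - y) = toC x - toC y := by
  funext j; simp [toC]

lemma toR_add (x y : Lat d) : toR (x + y) = toR x + toR y := by
  funext j; simp [toR]

lemma col_mem_NA (i : Fin n) : a i ∈ NA a :=
  AddSubmonoid.subset_closure ⟨i, rfl⟩

lemma NFace_le_NA (F : Set (Fin n)) : NFace a F ≤ NA a :=
  AddSubmonoid.closure_mono (Set.image_subset_range a F)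

lemma sigmaF_mem_NFace {H F : Set (Fin n)} (hHF : H ⊆ F) : sigmaF a H ∈ NFace a F := by
  refine AddSubmonoid.sum_mem _ fun i _ => ?_
  split_ifs with hi
  · exact AddSubmonoid.subset_closure ⟨i, hHF hi, rfl⟩
  · exact zero_mem _

lemma sigmaF_mem_NA (H : Set (Fin n)) : sigmaF a H ∈ NA a :=
  NFace_le_NA a H (sigmaF_mem_NFace a subset_rfl)

lemma exists_sigmaF_eq_add {H : Set (Fin n)} {i : Fin n} (hi : i ∈ H) :
    ∃ τ ∈ NA a, sigmaF a H = τ + a i := by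
  refine ⟨∑ j ∈ Finset.univ.erase i, if j ∈ H then a j else 0,
    AddSubmonoid.sum_mem _ fun j _ => ?_, ?_⟩
  · split_ifs
    exacts [col_mem_NA a j, zero_mem _]
  · rw [sigmaF, ← Finset.sum_erase_add _ _ (Finset.mem_univ i), if_pos hi]

lemma cone_zero (F : Set (Fin n)) : (0 : Fin d → ℝ) ∈ cone a F :=
  ⟨0, fun _ => le_rfl, fun _ _ => rfl, by simp⟩

lemma cone_add {F : Set (Fin n)} {x y : Fin d → ℝ} (hx : x ∈ cone a F) (hy : y ∈ cone a F) :
    x + y ∈ cone a F := by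
  obtain ⟨c, hc0, hcF, rfl⟩ := hx
  obtain ⟨e, he0, heF, rfl⟩ := hy
  refine ⟨c + e, fun i => add_nonneg (hc0 i) (he0 i), fun i hi => by simp [hcF i hi, heF i hi],
    ?_⟩
  simp [add_smul, Finset.sum_add_distrib]

lemma toR_col_mem_cone {F : Set (Fin n)} {i : Fin n} (hi : i ∈ F) : toR (a i) ∈ cone a F := by
  refine ⟨Pi.single i 1, fun j => ?_, fun j hj => ?_, by simp [Pi.single_apply]⟩
  · rw [Pi.single_apply]; split_ifs <;> norm_num
  · exact Pi.single_eq_of_ne (ne_of_mem_of_not_mem hi hj).symm 1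

lemma toR_mem_cone_of_mem_NFace {F : Set (Fin n)} {x : Lat d} (hx : x ∈ NFace a F) :
    toR x ∈ cone a F := by
  induction hx using AddSubmonoid.closure_induction with
  | mem y hy =>
      obtain ⟨i, hi, rfl⟩ := hy
      exact toR_col_mem_cone a hi
  | zero => simpa using cone_zero a F
  | add y z _ _ hy hz => rw [toR_add]; exact cone_add a hy hz

lemma toR_mem_cone_of_mem_NA {x : Lat d} (hx : x ∈ NA a) : toR x ∈ cone a Set.univ :=
  toR_mem_cone_of_mem_NFace a (by rwa [NFace, Set.image_univ])

lemma IsFace.toR_mem_cone_of_add_mem {F : Set (Fin n)} (hF : IsFace a F) {x y : Lat d}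
    (hx : x ∈ NA a) (hy : y ∈ NA a) (hxy : x + y ∈ NFace a F) : toR y ∈ cone a F :=
  (hF.1 _ _ (toR_mem_cone_of_mem_NA a hx) (toR_mem_cone_of_mem_NA a hy)
    (toR_add x y ▸ toR_mem_cone_of_mem_NFace a hxy)).2

lemma IsFace.subset_of_add_sigmaF_mem {F H : Set (Fin n)} (hF : IsFace a F) {x : Lat d}
    (hx : x ∈ NA a) (h : x + sigmaF a H ∈ NFace a F) : H ⊆ F := by
  intro i hi
  obtain ⟨τ, hτ, hσ⟩ := exists_sigmaF_eq_add a hi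
  rw [hσ, ← add_assoc] at h
  exact hF.2 i (hF.toR_mem_cone_of_add_mem a (add_mem hx hτ) (col_mem_NA a i) h)

lemma toC_mem_CFace {F : Set (Fin n)} {x : Lat d} (hx : x ∈ NFace a F) :
    toC x ∈ CFace a F := by
  induction hx using AddSubmonoid.closure_induction with
  | mem y hy => exact Submodule.subset_span ⟨y, hy, rfl⟩
  | zero => simp
  | add y z _ _ hy hz => rw [toC_add]; exact add_mem hy hz

lemma toC_mem_CFace_of_add_mem {F : Set (Fin n)} {x u : Lat d} (hu : u ∈ NFace a F)
    (hxu : x + u ∈ NFace a F) : toC x ∈ CFace a F := by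
  simpa [toC_add] using sub_mem (toC_mem_CFace a hxu) (toC_mem_CFace a hu)

lemma affine_subset_zClosure (F : Set (Fin n)) (α : Lat d) :
    {x : CS d | x - toC α ∈ CFace a F} ⊆
      zClosure (toC '' {γ : Lat d | ∃ f ∈ NFace a F, γ = α + f}) := by
  set T := toC '' {γ : Lat d | ∃ f ∈ NFace a F, γ = α + f}
  have hT : ∀ v ∈ toC '' (a '' F), ∀ y ∈ T, y + v ∈ T := by
    rintro _ ⟨_, ⟨i, hi, rfl⟩, rfl⟩ _ ⟨_, ⟨f, hf, rfl⟩, rfl⟩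
    exact ⟨α + (f + a i), ⟨f + a i, add_mem hf (AddSubmonoid.subset_closure ⟨i, hi, rfl⟩), rfl⟩,
      by rw [← add_assoc, toC_add]⟩
  have hα : toC α ∈ zClosure T := subset_zClosure _ ⟨α, ⟨0, zero_mem _, (add_zero α).symm⟩, rfl⟩
  intro x hx
  simpa using mem_zClosure_add_of_mem_span hT hα hx

end Faces

section Filtration

variable {a : Fin n → Lat d} {M : Type} [AddCommGroup M] [Module ℂ M]
  (g : GradedSAMod a M)

lemma GradedSAMod.act_congr {u v : Lat d} (huv : u = v) (hu : u ∈ NA a) (hv : v ∈ NA a) :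
    g.act u hu = g.act v hv := by
  subst huv; rfl

/-- `m` survives in the localization `M[∂^{−H}]`: no power of `t^{σ_H}` kills it. -/
def GradedSAMod.Survives (H : Set (Fin n)) (m : M) : Prop :=
  ∀ (k : ℕ) (hk : k • sigmaF a H ∈ NA a), g.act _ hk m ≠ 0

variable {g}

lemma GradedSAMod.Survives.ne_zero {H : Set (Fin n)} {m : M} (h : g.Survives H m) : m ≠ 0 := by
  have h0 := h 0 (by simp)
  rwa [g.act_congr (zero_nsmul _) _ (zero_mem _), g.act_zero] at h0

lemma GradedSAMod.Survives.act_sigmaF {H : Set (Fin n)} {m : M} (h : g.Survives H m) :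
    g.Survives H (g.act (sigmaF a H) (sigmaF_mem_NA a H) m) := by
  intro k hk
  have hk' := add_mem hk (sigmaF_mem_NA a H)
  have hk1 : (k + 1) • sigmaF a H ∈ NA a := by rwa [succ_nsmul]
  rw [← LinearMap.comp_apply, ← g.act_add _ hk _ _ hk', ← g.act_congr (succ_nsmul _ k) hk1]
  exact h (k + 1) hk1

variable {r : ℕ} {N : Fin (r + 1) → Submodule ℂ M} {Fi : Fin r → Set (Fin n)}
  {αi : Fin r → Lat d}

/-- By the face property, `t^{σ_H}` pushes an element of `M_{i+1}` of degree in `α_i + ℕF_i`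
into `M_i` unless `F_i ⪰ H`; so a surviving element descends the filtration until it meets such
a quotient. -/
theorem GradedSAMod.exists_add_nsmul_sigmaF_mem_of_survives (hbot : N 0 = ⊥)
    (hstable : ∀ i, IsStableSub g (N i)) (hFi : ∀ i, IsFace a (Fi i))
    (hq1 : ∀ (i : Fin r) (γ : Lat d), (¬ ∃ f ∈ NFace a (Fi i), γ = αi i + f) →
      N i.succ ⊓ g.decomp γ ≤ N i.castSucc)
    {H : Set (Fin n)} (j : Fin (r + 1)) {δ : Lat d} {m : M} (hm : m ∈ N j)
    (hmδ : m ∈ g.decomp δ) (hsurv : g.Survives H m) :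
    ∃ i, H ⊆ Fi i ∧ ∃ l : ℕ, ∃ f ∈ NFace a (Fi i), δ + l • sigmaF a H = αi i + f := by
  induction j using Fin.induction generalizing δ m with
  | zero =>
      rw [hbot, Submodule.mem_bot] at hm
      exact absurd hm hsurv.ne_zero
  | succ i ih =>
      by_cases hm' : m ∈ N i.castSucc
      · exact ih hm' hmδ hsurv
      obtain ⟨f, hf, rfl⟩ : ∃ f ∈ NFace a (Fi i), δ = αi i + f := by
        by_contra h
        exact hm' (hq1 i δ h ⟨hm, hmδ⟩)
      by_cases hHF : H ⊆ Fi i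
      · exact ⟨i, hHF, 0, f, hf, by simp⟩
      have hσ : g.act _ (sigmaF_mem_NA a H) m ∈ N i.castSucc := by
        refine hq1 i _ ?_ ⟨hstable _ _ _ m hm, g.act_grade _ _ _ m hmδ⟩
        rintro ⟨f', hf', he⟩
        refine hHF ((hFi i).subset_of_add_sigmaF_mem a (NFace_le_NA a _ hf) ?_)
        rwa [add_left_cancel (he.symm.trans (add_assoc _ _ _)).symm]
      obtain ⟨i', hi', l, f', hf', he⟩ :=
        ih hσ (g.act_grade _ _ _ m hmδ) hsurv.act_sigmaF
      exact ⟨i', hi', l + 1, f', hf', by rw [← he, succ_nsmul]; abel⟩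

end Filtration

section Quasidegrees

variable {a : Fin n → Lat d} {M : Type} [AddCommGroup M] [Module ℂ M]
  {g : GradedSAMod a M} {r : ℕ} {N : Fin (r + 1) → Submodule ℂ M} {Fi : Fin r → Set (Fin n)}
  {αi : Fin r → Lat d}

theorem GradedSAMod.qdegLoc_subset (hbot : N 0 = ⊥) (htop : N (Fin.last r) = ⊤)
    (hstable : ∀ i, IsStableSub g (N i)) (hFi : ∀ i, IsFace a (Fi i))
    (hq1 : ∀ (i : Fin r) (γ : Lat d), (¬ ∃ f ∈ NFace a (Fi i), γ = αi i + f) →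
      N i.succ ⊓ g.decomp γ ≤ N i.castSucc)
    (H : Set (Fin n)) :
    g.qdegLoc H ⊆
      ⋃ (i : Fin r) (_ : H ⊆ Fi i), {x : CS d | x - toC (αi i) ∈ CFace a (Fi i)} := by
  have hclosed : IsZClosed (⋃ (i : Fin r) (_ : H ⊆ Fi i),
      {x : CS d | x - toC (αi i) ∈ CFace a (Fi i)}) :=
    isZClosed_biUnion {i | H ⊆ Fi i} (Set.toFinite _) _ fun i _ => isZClosed_affine _ _
  refine Set.iUnion_subset fun k => hclosed.zClosure_subset ?_
  rintro _ ⟨γ, ⟨m, hm, -, hsurv⟩, rfl⟩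
  obtain ⟨i, hHF, l, f, hf, he⟩ := g.exists_add_nsmul_sigmaF_mem_of_survives hbot hstable hFi hq1
    (Fin.last r) (htop ▸ Submodule.mem_top) hm hsurv
  refine Set.mem_biUnion hHF ?_
  rw [Set.mem_ofPred_eq, ← toC_sub]
  refine toC_mem_CFace_of_add_mem a (u := (k + l) • sigmaF a H)
    (AddSubmonoid.nsmul_mem _ (sigmaF_mem_NFace a hHF) _) ?_
  convert hf using 1
  rw [add_nsmul]
  linear_combination he

theorem GradedSAMod.subset_qdegLoc
    (hgen : ∀ (i : Fin r) (γ : Lat d), (∃ f ∈ NFace a (Fi i), γ = αi i + f) →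
      ∃ m, m ∈ N i.succ ⊓ g.decomp γ ∧ m ∉ N i.castSucc)
    (hq3 : ∀ (i : Fin r) (u : Lat d), u ∈ NFace a (Fi i) → ∀ (hu : u ∈ NA a)
      (γ : Lat d) (m : M), (∃ f ∈ NFace a (Fi i), γ = αi i + f) →
      m ∈ N i.succ ⊓ g.decomp γ → m ∉ N i.castSucc → g.act u hu m ∉ N i.castSucc)
    (H : Set (Fin n)) :
    ⋃ (i : Fin r) (_ : H ⊆ Fi i), {x : CS d | x - toC (αi i) ∈ CFace a (Fi i)} ⊆
      g.qdegLoc H := by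
  refine Set.iUnion₂_subset fun i hHF => ?_
  have hsurv : {γ | ∃ f ∈ NFace a (Fi i), γ = αi i + f} ⊆
      {γ | γ + 0 • sigmaF a H ∈ g.survTdeg H} := by
    intro γ hγ
    obtain ⟨m, hm, hm'⟩ := hgen i γ hγ
    refine ⟨m, by simpa using hm.2, fun h0 => hm' (h0 ▸ zero_mem _), fun k hk h0 => ?_⟩
    exact hq3 i _ (AddSubmonoid.nsmul_mem _ (sigmaF_mem_NFace a hHF) k) hk γ m hγ hm hm'
      (h0 ▸ zero_mem _)
  exact (affine_subset_zClosure a (Fi i) (αi i)).trans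
    ((zClosure_mono (Set.image_mono hsurv)).trans (Set.subset_iUnion_of_subset 0 subset_rfl))

end Quasidegrees

theorem qdegLoc_of_toric_filtration_general
    {d n : ℕ} (a : Fin n → Lat d)
    (M : Type) [AddCommGroup M] [Module ℂ M]
    (g : GradedSAMod a M)
    (r : ℕ) (N : Fin (r + 1) → Submodule ℂ M)
    (hbot : N 0 = ⊥) (htop : N (Fin.last r) = ⊤)
    (hstable : ∀ i, IsStableSub g (N i))
    (Fi : Fin r → Set (Fin n)) (hFi : ∀ i, IsFace a (Fi i))
    (αi : Fin r → Lat d)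
    -- the graded pieces of M_i/M_{i−1} vanish outside α_i + ℕF_i …
    (hq1 : ∀ (i : Fin r) (γ : Lat d), (¬ ∃ f ∈ NFace a (Fi i), γ = αi i + f) →
      N i.succ ⊓ g.decomp γ ≤ N i.castSucc)
    -- … and are one-dimensional on α_i + ℕF_i …
    (hq2 : ∀ (i : Fin r) (γ : Lat d), (∃ f ∈ NFace a (Fi i), γ = αi i + f) →
      (∃ m, m ∈ N i.succ ⊓ g.decomp γ ∧ m ∉ N i.castSucc) ∧
      (∀ m m' : M, m ∈ N i.succ ⊓ g.decomp γ → m' ∈ N i.succ ⊓ g.decomp γ →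
        m ∉ N i.castSucc → ∃ c : ℂ, m' - c • m ∈ N i.castSucc))
    -- … and the monomials of ℕF_i act bijectively on them (so M_i/M_{i−1} ≅ S_{F_i}(−α_i)).
    (hq3 : ∀ (i : Fin r) (u : Lat d), u ∈ NFace a (Fi i) → ∀ (hu : u ∈ NA a)
      (γ : Lat d) (m : M), (∃ f ∈ NFace a (Fi i), γ = αi i + f) →
      m ∈ N i.succ ⊓ g.decomp γ → m ∉ N i.castSucc → g.act u hu m ∉ N i.castSucc)
    (H : Set (Fin n)) :
    g.qdegLoc H =
      ⋃ (i : Fin r) (_ : H ⊆ Fi i), {x : CS d | x - toC (αi i) ∈ CFace a (Fi i)} :=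
  (g.qdegLoc_subset hbot htop hstable hFi hq1 H).antisymm
    (g.subset_qdegLoc (fun i γ hγ => (hq2 i γ hγ).1) hq3 H)

/-- If the finitely generated ℤ^d-graded S_A-module `M` has a filtration
`0 = M_0 ⊆ ⋯ ⊆ M_r = M` by graded submodules with `M_i/M_{i−1} ≅ S_{F_i}(−α_i)`, then for
every face `H ⪯ A`: qdeg M[∂^{−H}] = ⋃_{i : F_i ⪰ H} (ℂF_i + α_i). -/
theorem qdegLoc_of_toric_filtration
    {d n : ℕ} (hd : 0 < d) (hn : 0 < n) (a : Fin n → Lat d)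
    (hZA : SpansZ a) (hPt : Pointed a)
    (M : Type) [AddCommGroup M] [Module ℂ M]
    (g : GradedSAMod a M) (hfg : g.FGmod)
    (r : ℕ) (N : Fin (r + 1) → Submodule ℂ M)
    (hmono : Monotone N) (hbot : N 0 = ⊥) (htop : N (Fin.last r) = ⊤)
    (hstable : ∀ i, IsStableSub g (N i))
    (hgraded : ∀ i, IsGradedSubC g.decomp (N i))
    (Fi : Fin r → Set (Fin n)) (hFi : ∀ i, IsFace a (Fi i))
    (αi : Fin r → Lat d)
    -- the graded pieces of M_i/M_{i−1} vanish outside α_i + ℕF_i …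
    (hq1 : ∀ (i : Fin r) (γ : Lat d), (¬ ∃ f ∈ NFace a (Fi i), γ = αi i + f) →
      N i.succ ⊓ g.decomp γ ≤ N i.castSucc)
    -- … and are one-dimensional on α_i + ℕF_i …
    (hq2 : ∀ (i : Fin r) (γ : Lat d), (∃ f ∈ NFace a (Fi i), γ = αi i + f) →
      (∃ m, m ∈ N i.succ ⊓ g.decomp γ ∧ m ∉ N i.castSucc) ∧
      (∀ m m' : M, m ∈ N i.succ ⊓ g.decomp γ → m' ∈ N i.succ ⊓ g.decomp γ →
        m ∉ N i.castSucc → ∃ c : ℂ, m' - c • m ∈ N i.castSucc))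
    -- … and the monomials of ℕF_i act bijectively on them (so M_i/M_{i−1} ≅ S_{F_i}(−α_i)).
    (hq3 : ∀ (i : Fin r) (u : Lat d), u ∈ NFace a (Fi i) → ∀ (hu : u ∈ NA a)
      (γ : Lat d) (m : M), (∃ f ∈ NFace a (Fi i), γ = αi i + f) →
      m ∈ N i.succ ⊓ g.decomp γ → m ∉ N i.castSucc → g.act u hu m ∉ N i.castSucc)
    (H : Set (Fin n)) (hH : IsFace a H) :
    g.qdegLoc H =
      ⋃ (i : Fin r) (_ : H ⊆ Fi i), {x : CS d | x - toC (αi i) ∈ CFace a (Fi i)} :=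
  qdegLoc_of_toric_filtration_general a M g r N hbot htop hstable Fi hFi αi hq1 hq2 hq3 H

end

end GKZ
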